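/- Donald's identity: for any finite ensemble {ρ_k; p_k} of density matrices with p_k ≥ 0, ∑_k p_k = 1, average ρ̄ = ∑_k p_k ρ_k, and any density matrix ρ′ of full rank, one has ∑_k p_k S(ρ_k || ρ′) = ∑_k p_k S(ρ_k || ρ̄) + S(ρ̄ || ρ′). -/
import Mathlib


open Matrix Complex
open scoped ComplexOrder
open scoped Kronecker Matrix

noncomputable section

/-- Generalized Pauli (Weyl–Heisenberg) unitary on `C^d`. -/
def pauliU (d : ℕ) (p q : Fin d) : Matrix (Fin d) (Fin d) ℂ :=
  Matrix.of fun k j => if k = j + q then Complex.exp (2 * Real.pi * Complex.I * p * j / d) else 0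

/-- Partial trace over the first (A) factor. -/
def trA {d : ℕ} (ρ : Matrix (Fin d × Fin d) (Fin d × Fin d) ℂ) : Matrix (Fin d) (Fin d) ℂ :=
  Matrix.of fun b b' => ∑ a : Fin d, ρ (a, b) (a, b')

/-- Partial trace over the second (B) factor. -/
def trB {d : ℕ} (ρ : Matrix (Fin d × Fin d) (Fin d × Fin d) ℂ) : Matrix (Fin d) (Fin d) ℂ :=
  Matrix.of fun a a' => ∑ b : Fin d, ρ (a, b) (a', b)

/-- Matrix (natural) logarithm of a Hermitian matrix, via spectral decomposition. -/
def mlog {n : Type*} [Fintype n] [DecidableEq n] (A : Matrix n n ℂ) : Matrix n n ℂ :=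
  if h : A.IsHermitian then
    (h.eigenvectorUnitary : Matrix n n ℂ) *
      Matrix.diagonal (fun i => (Real.log (h.eigenvalues i) : ℂ)) *
      star (h.eigenvectorUnitary : Matrix n n ℂ)
  else 0

/-- Base-2 matrix logarithm. -/
def mlog2 {n : Type*} [Fintype n] [DecidableEq n] (A : Matrix n n ℂ) : Matrix n n ℂ :=
  ((Real.log 2 : ℂ))⁻¹ • mlog A

/-- Von Neumann entropy (base 2): `S(ρ) = -Tr(ρ log₂ ρ)`. -/
def vnEntropy {n : Type*} [Fintype n] [DecidableEq n] (ρ : Matrix n n ℂ) : ℝ :=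
  -((ρ * mlog ρ).trace).re / Real.log 2

/-- Quantum relative entropy (base 2): `S(ρ‖σ) = Tr(ρ (log₂ ρ - log₂ σ))`. -/
def relEnt {n : Type*} [Fintype n] [DecidableEq n] (ρ σ : Matrix n n ℂ) : ℝ :=
  ((ρ * (mlog ρ - mlog σ)).trace).re / Real.log 2

/-- A density matrix: positive semidefinite with unit trace. -/
def IsDensity {n : Type*} [Fintype n] [DecidableEq n] (ρ : Matrix n n ℂ) : Prop :=
  ρ.PosSemidef ∧ ρ.trace = 1

/-- Separability of a bipartite state on `C^d ⊗ C^d`. -/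
def SeparableState {d : ℕ} (σ : Matrix (Fin d × Fin d) (Fin d × Fin d) ℂ) : Prop :=
  ∃ (m : ℕ) (w : Fin m → ℝ) (A B : Fin m → Matrix (Fin d) (Fin d) ℂ),
    (∀ i, 0 ≤ w i) ∧ (∑ i, w i) = 1 ∧
    (∀ i, IsDensity (A i)) ∧ (∀ i, IsDensity (B i)) ∧
    σ = ∑ i, (w i : ℂ) • (A i ⊗ₖ B i)

/-- Relative entropy of entanglement. -/
def relEntEntanglement {d : ℕ} (ρ : Matrix (Fin d × Fin d) (Fin d × Fin d) ℂ) : ℝ :=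
  sInf {x : ℝ | ∃ σ, SeparableState σ ∧ x = relEnt ρ σ}

end

/-- Donald's identity:
`∑ₖ pₖ S(ρₖ‖ρ′) = ∑ₖ pₖ S(ρₖ‖ρ̄) + S(ρ̄‖ρ′)` where `ρ̄ = ∑ₖ pₖ ρₖ`. -/
theorem donald_identity {n : Type*} [Fintype n] [DecidableEq n]
    {ι : Type*} [Fintype ι]
    (p : ι → ℝ) (hp : ∀ k, 0 ≤ p k) (hp1 : ∑ k, p k = 1)
    (ρ : ι → Matrix n n ℂ) (hρ : ∀ k, IsDensity (ρ k))
    (ρ' : Matrix n n ℂ) (hρ' : IsDensity ρ') (hfull : ρ'.PosDef) :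
    ∑ k, p k * relEnt (ρ k) ρ'
      = ∑ k, p k * relEnt (ρ k) (∑ j, (p j : ℂ) • ρ j)
          + relEnt (∑ j, (p j : ℂ) • ρ j) ρ' := by
  set σ := ∑ j, (p j : ℂ) • ρ j with hσ
  have key : ∀ k, p k * relEnt (ρ k) ρ'
      = p k * relEnt (ρ k) σ
        + p k * (((ρ k * (mlog σ - mlog ρ')).trace).re / Real.log 2) := by
    intro k
    have h1 : ρ k * (mlog (ρ k) - mlog ρ')
        = ρ k * (mlog (ρ k) - mlog σ) + ρ k * (mlog σ - mlog ρ') := by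
      rw [← mul_add, sub_add_sub_cancel]
    simp only [relEnt, h1, Matrix.trace_add, Complex.add_re]
    ring
  have h2 : relEnt σ ρ'
      = ∑ k, p k * (((ρ k * (mlog σ - mlog ρ')).trace).re / Real.log 2) := by
    have h3 : σ * (mlog σ - mlog ρ')
        = ∑ j, (p j : ℂ) • (ρ j * (mlog σ - mlog ρ')) := by
      rw [hσ, Finset.sum_mul]
      simp [smul_mul_assoc]
    rw [relEnt, h3, Matrix.trace_sum]
    rw [Complex.re_sum, Finset.sum_div]
    congr 1
    ext j
    rw [Matrix.trace_smul, smul_eq_mul, Complex.re_ofReal_mul, mul_div_assoc]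
  rw [h2, ← Finset.sum_add_distrib]
  exact Finset.sum_congr rfl fun k _ => key k
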